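/- There exists a constant C > 0, depending only on δ, β_S, β_Ω, such that for all h ∈ (0,1/4) and all (r,z) with 0 < r < δ and 0 < z < h + γ_s(r): |Ψ(r,z)| ≤ C, |∂_zΨ(r,z)| ≤ C/(h+γ_s(r)), and |∂_rΨ(r,z)| ≤ C·r/(h+γ_s(r)). -/

import Mathlib

open Real MeasureTheory intervalIntegral

noncomputable section

/-- `γ_s(r) = 1 - √(1 - r²)`. -/
def gam (r : ℝ) : ℝ := 1 - Real.sqrt (1 - r ^ 2)

/-- `α_P(r) = (h + γ_s(r)) / β_Ω`. -/
def aP (βΩ h r : ℝ) : ℝ := (h + gam r) / βΩ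

/-- `α_S(r) = (1/β_S + 2) (h + γ_s(r))`. -/
def aS (βS h r : ℝ) : ℝ := (1 / βS + 2) * (h + gam r)

/-- The cubic `Φ(r,t) = P₁(r) t + P₂(r) t² + P₃(r) t³` of the slip case. -/
def Phi (βS βΩ h r t : ℝ) : ℝ :=
  6 * (2 + aS βS h r) / (12 + 4 * (aS βS h r + aP βΩ h r) + aS βS h r * aP βΩ h r) * t +
  3 * (2 + aS βS h r) * aP βΩ h r / (12 + 4 * (aS βS h r + aP βΩ h r) + aS βS h r * aP βΩ h r) * t ^ 2 +
  -(2 * (aS βS h r + aS βS h r * aP βΩ h r + aP βΩ h r)) / (12 + 4 * (aS βS h r + aP βΩ h r) + aS βS h r * aP βΩ h r) * t ^ 3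

/-- `Ψ(r,z) = Φ(r, z / (h + γ_s(r)))`. -/
def Psi (βS βΩ h r z : ℝ) : ℝ := Phi βS βΩ h r (z / (h + gam r))

/-- Partial derivative in the first (`r`) variable. -/
def dR (f : ℝ → ℝ → ℝ) : ℝ → ℝ → ℝ := fun r z => deriv (fun r' => f r' z) r

/-- Partial derivative in the second (`z`) variable. -/
def dZ (f : ℝ → ℝ → ℝ) : ℝ → ℝ → ℝ := fun r z => deriv (fun z' => f r z') z

/-!
Write `H = h + γ_s(r)` for the local gap. With `α_S = (1/β_S + 2) H` and `α_P = H / β_Ω`, the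
coefficients `P_i` are rational functions of `H` whose denominator `Δ` is at least `12` for
`H ≥ 0`, so by compactness they and their `H`-derivatives are bounded on `[0, 2]` by a constant
depending only on `β_S, β_Ω`. Since `Ψ = Φ(H, z / H)` with `z / H ∈ [0, 1]`, this bounds `Ψ`, gives
`∂_z Ψ = ∂_t Φ / H = O(1 / H)` and `∂_H Ψ = O(1) + O(1 / H) = O(1 / H)`. Finally
`∂_r Ψ = γ_s'(r) ∂_H Ψ` with `0 ≤ γ_s'(r) = r / √(1 - r²) ≤ 2 r` for `r ≤ 1/2`.
-/

open Set

def C1BoundedOn (f : ℝ → ℝ) (s : Set ℝ) (C : ℝ) : Prop :=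
  ∀ x ∈ s, DifferentiableAt ℝ f x ∧ |f x| ≤ C ∧ |deriv f x| ≤ C

lemma C1BoundedOn.mono {f : ℝ → ℝ} {s : Set ℝ} {C C' : ℝ} (hf : C1BoundedOn f s C)
    (hC : C ≤ C') : C1BoundedOn f s C' :=
  fun x hx => let ⟨hd, h₀, h₁⟩ := hf x hx; ⟨hd, h₀.trans hC, h₁.trans hC⟩

lemma IsCompact.exists_c1BoundedOn {f : ℝ → ℝ} {K U : Set ℝ} (hK : IsCompact K) (hU : IsOpen U)
    (hKU : K ⊆ U) (hf : ContDiffOn ℝ 1 f U) : ∃ C, C1BoundedOn f K C := by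
  obtain ⟨C₀, hC₀⟩ := hK.exists_bound_of_continuousOn (hf.continuousOn.mono hKU)
  obtain ⟨C₁, hC₁⟩ :=
    hK.exists_bound_of_continuousOn ((hf.continuousOn_deriv_of_isOpen hU le_rfl).mono hKU)
  refine ⟨max C₀ C₁, fun x hx => ⟨?_, ?_, ?_⟩⟩
  · exact (hf.differentiableOn one_ne_zero).differentiableAt (hU.mem_nhds (hKU hx))
  · exact (hC₀ x hx).trans (le_max_left _ _)
  · exact (hC₁ x hx).trans (le_max_right _ _)

lemma IsCompact.exists_c1BoundedOn_div {N D : ℝ → ℝ} {K : Set ℝ} (hK : IsCompact K)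
    (hN : ContDiff ℝ 1 N) (hD : ContDiff ℝ 1 D) (hD₀ : ∀ x ∈ K, D x ≠ 0) :
    ∃ C, C1BoundedOn (fun x => N x / D x) K C :=
  hK.exists_c1BoundedOn (isOpen_ne_fun hD.continuous continuous_const) hD₀
    (hN.contDiffOn.div hD.contDiffOn fun _ hx => hx)

def slipDen (a b : ℝ) : ℝ := 12 + 4 * (a + b) + a * b

def slipP₁ (a b : ℝ) : ℝ := 6 * (2 + a) / slipDen a b

def slipP₂ (a b : ℝ) : ℝ := 3 * (2 + a) * b / slipDen a b

def slipP₃ (a b : ℝ) : ℝ := -(2 * (a + a * b + b)) / slipDen a b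

/-- A coefficient `P(α_S, α_P)` as a function of the local gap `H = h + γ_s(r)`. -/
def slipCoeff (P : ℝ → ℝ → ℝ) (βS βΩ H : ℝ) : ℝ := P ((1 / βS + 2) * H) (H / βΩ)

lemma slipDen_pos {a b : ℝ} (ha : 0 ≤ a) (hb : 0 ≤ b) : 0 < slipDen a b := by
  unfold slipDen
  positivity

lemma exists_c1BoundedOn_slipCoeff {βS βΩ : ℝ} (hβS : 0 < βS) (hβΩ : 0 < βΩ) :
    ∃ K, 0 < K ∧ C1BoundedOn (slipCoeff slipP₁ βS βΩ) (Icc 0 2) K ∧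
      C1BoundedOn (slipCoeff slipP₂ βS βΩ) (Icc 0 2) K ∧
      C1BoundedOn (slipCoeff slipP₃ βS βΩ) (Icc 0 2) K := by
  set σ := 1 / βS + 2
  have hD : ContDiff ℝ 1 fun H => slipDen (σ * H) (H / βΩ) := by
    unfold slipDen
    fun_prop
  have hD₀ : ∀ H ∈ Icc (0 : ℝ) 2, slipDen (σ * H) (H / βΩ) ≠ 0 := fun H hH =>
    (slipDen_pos (mul_nonneg (by positivity) hH.1) (div_nonneg hH.1 hβΩ.le)).ne'
  obtain ⟨K₁, h₁⟩ := isCompact_Icc.exists_c1BoundedOn_div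
    (N := fun H => 6 * (2 + σ * H)) (by fun_prop) hD hD₀
  obtain ⟨K₂, h₂⟩ := isCompact_Icc.exists_c1BoundedOn_div
    (N := fun H => 3 * (2 + σ * H) * (H / βΩ)) (by fun_prop) hD hD₀
  obtain ⟨K₃, h₃⟩ := isCompact_Icc.exists_c1BoundedOn_div
    (N := fun H => -(2 * (σ * H + σ * H * (H / βΩ) + H / βΩ))) (by fun_prop) hD hD₀
  refine ⟨max 1 (max K₁ (max K₂ K₃)), lt_max_of_lt_left one_pos,
    h₁.mono ?_, h₂.mono ?_, h₃.mono ?_⟩ <;> simp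

section Cubic

def cubic (a b c t : ℝ) : ℝ := a * t + b * t ^ 2 + c * t ^ 3

def cubicDeriv (a b c t : ℝ) : ℝ := a + 2 * b * t + 3 * c * t ^ 2

lemma hasDerivAt_cubic (a b c t : ℝ) : HasDerivAt (cubic a b c) (cubicDeriv a b c t) t := by
  have := (((hasDerivAt_id' t).const_mul a).add ((hasDerivAt_pow 2 t).const_mul b)).add
    ((hasDerivAt_pow 3 t).const_mul c)
  exact this.congr_deriv (by simp only [cubicDeriv]; push_cast; ring)

variable {a b c t K : ℝ}

lemma abs_mul_pow_le (ha : |a| ≤ K) (ht₀ : 0 ≤ t) (ht₁ : t ≤ 1) (n : ℕ) : |a * t ^ n| ≤ K := by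
  rw [abs_mul, abs_of_nonneg (pow_nonneg ht₀ n)]
  simpa using mul_le_mul ha (pow_le_one₀ ht₀ ht₁) (pow_nonneg ht₀ n) ((abs_nonneg a).trans ha)

lemma abs_cubic_le (ha : |a| ≤ K) (hb : |b| ≤ K) (hc : |c| ≤ K) (ht₀ : 0 ≤ t) (ht₁ : t ≤ 1) :
    |cubic a b c t| ≤ 3 * K := by
  have := abs_add_three (a * t) (b * t ^ 2) (c * t ^ 3)
  have := abs_mul_pow_le ha ht₀ ht₁ 1
  have := abs_mul_pow_le hb ht₀ ht₁ 2
  have := abs_mul_pow_le hc ht₀ ht₁ 3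
  simp only [cubic, pow_one] at *
  linarith

lemma abs_cubicDeriv_le (ha : |a| ≤ K) (hb : |b| ≤ K) (hc : |c| ≤ K) (ht₀ : 0 ≤ t)
    (ht₁ : t ≤ 1) : |cubicDeriv a b c t| ≤ 6 * K := by
  have h₁ := abs_mul_pow_le hb ht₀ ht₁ 1
  have h₂ := abs_mul_pow_le hc ht₀ ht₁ 2
  calc |cubicDeriv a b c t| = |a + 2 * (b * t ^ 1) + 3 * (c * t ^ 2)| := by
        rw [cubicDeriv]; ring_nf
    _ ≤ |a| + |2 * (b * t ^ 1)| + |3 * (c * t ^ 2)| := abs_add_three _ _ _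
    _ = |a| + 2 * |b * t ^ 1| + 3 * |c * t ^ 2| := by simp only [abs_mul]; norm_num
    _ ≤ 6 * K := by linarith

end Cubic

section CubicProfile

def cubicProfile (c₁ c₂ c₃ : ℝ → ℝ) (H z : ℝ) : ℝ := cubic (c₁ H) (c₂ H) (c₃ H) (z / H)

variable {c₁ c₂ c₃ : ℝ → ℝ} {s : Set ℝ} {H z K : ℝ}

lemma hasDerivAt_cubicProfile (c₁ c₂ c₃ : ℝ → ℝ) (H z : ℝ) :
    HasDerivAt (cubicProfile c₁ c₂ c₃ H) (cubicDeriv (c₁ H) (c₂ H) (c₃ H) (z / H) / H) z := by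
  have := (hasDerivAt_cubic (c₁ H) (c₂ H) (c₃ H) (z / H)).comp z ((hasDerivAt_id' z).div_const H)
  exact this.congr_deriv (by ring)

lemma hasDerivAt_cubicProfile_gap {d₁ d₂ d₃ : ℝ} (h₁ : HasDerivAt c₁ d₁ H)
    (h₂ : HasDerivAt c₂ d₂ H) (h₃ : HasDerivAt c₃ d₃ H) (hH : H ≠ 0) :
    HasDerivAt (fun H => cubicProfile c₁ c₂ c₃ H z)
      (cubic d₁ d₂ d₃ (z / H) - cubicDeriv (c₁ H) (c₂ H) (c₃ H) (z / H) * (z / H) / H) H := by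
  have ht : HasDerivAt (fun H => z / H) (-(z / H) / H) H := by
    have := (hasDerivAt_inv hH).const_mul z
    exact this.congr_deriv (by field_simp)
  have := ((h₁.mul ht).add (h₂.mul (ht.pow 2))).add (h₃.mul (ht.pow 3))
  exact this.congr_deriv (by simp only [cubic, cubicDeriv, Pi.pow_apply]; push_cast; ring)

variable (hc₁ : C1BoundedOn c₁ s K) (hc₂ : C1BoundedOn c₂ s K) (hc₃ : C1BoundedOn c₃ s K)
  (hHs : H ∈ s) (hz : z ∈ Icc 0 H)
include hc₁ hc₂ hc₃ hHs hz

lemma abs_cubicProfile_le (hH : 0 < H) : |cubicProfile c₁ c₂ c₃ H z| ≤ 3 * K :=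
  abs_cubic_le (hc₁ H hHs).2.1 (hc₂ H hHs).2.1 (hc₃ H hHs).2.1 (div_nonneg hz.1 hH.le)
    ((div_le_one hH).2 hz.2)

lemma abs_deriv_cubicProfile_le (hH : 0 < H) :
    |deriv (cubicProfile c₁ c₂ c₃ H) z| ≤ 6 * K / H := by
  rw [(hasDerivAt_cubicProfile c₁ c₂ c₃ H z).deriv, abs_div, abs_of_pos hH]
  gcongr
  exact abs_cubicDeriv_le (hc₁ H hHs).2.1 (hc₂ H hHs).2.1 (hc₃ H hHs).2.1
    (div_nonneg hz.1 hH.le) ((div_le_one hH).2 hz.2)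

lemma exists_hasDerivAt_cubicProfile_gap (hH : 0 < H) (hH₂ : H ≤ 2) :
    ∃ F', HasDerivAt (fun H => cubicProfile c₁ c₂ c₃ H z) F' H ∧ |F'| ≤ 12 * K / H := by
  obtain ⟨hd₁, -, hb₁⟩ := hc₁ H hHs
  obtain ⟨hd₂, -, hb₂⟩ := hc₂ H hHs
  obtain ⟨hd₃, -, hb₃⟩ := hc₃ H hHs
  refine ⟨_, hasDerivAt_cubicProfile_gap hd₁.hasDerivAt hd₂.hasDerivAt hd₃.hasDerivAt hH.ne', ?_⟩
  set t := z / H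
  have ht₀ : 0 ≤ t := div_nonneg hz.1 hH.le
  have ht₁ : t ≤ 1 := (div_le_one hH).2 hz.2
  have hK : 0 ≤ K := (abs_nonneg _).trans hb₁
  have hcubic := abs_cubic_le hb₁ hb₂ hb₃ ht₀ ht₁
  have hcubicDeriv := abs_cubicDeriv_le (hc₁ H hHs).2.1 (hc₂ H hHs).2.1 (hc₃ H hHs).2.1 ht₀ ht₁
  -- `H ≤ 2` absorbs the bounded term into the `1 / H` one
  have habsorb : 3 * K ≤ 6 * K / H := by rw [le_div_iff₀ hH]; nlinarith
  calc _ ≤ |cubic (deriv c₁ H) (deriv c₂ H) (deriv c₃ H) t|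
        + |cubicDeriv (c₁ H) (c₂ H) (c₃ H) t * t / H| := abs_sub _ _
    _ = |cubic (deriv c₁ H) (deriv c₂ H) (deriv c₃ H) t|
        + |cubicDeriv (c₁ H) (c₂ H) (c₃ H) t| * t / H := by
          rw [abs_div, abs_mul, abs_of_nonneg ht₀, abs_of_pos hH]
    _ ≤ 3 * K + 6 * K * 1 / H := by gcongr
    _ ≤ 12 * K / H := by linarith [show 6 * K * 1 / H + 6 * K / H = 12 * K / H by ring]

end CubicProfile

lemma gam_nonneg (r : ℝ) : 0 ≤ gam r := by
  have : √(1 - r ^ 2) ≤ 1 := Real.sqrt_le_one.2 (by nlinarith)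
  unfold gam
  linarith

lemma gam_le_one (r : ℝ) : gam r ≤ 1 := by
  unfold gam
  linarith [Real.sqrt_nonneg (1 - r ^ 2)]

lemma hasDerivAt_gam {r : ℝ} (hr : r ^ 2 < 1) : HasDerivAt gam (r / √(1 - r ^ 2)) r := by
  have := ((Real.hasDerivAt_sqrt (by linarith)).comp r
    ((hasDerivAt_pow 2 r).const_sub 1)).const_sub 1
  exact this.congr_deriv (by field_simp; push_cast; ring)

lemma gam_deriv_le {r : ℝ} (hr₀ : 0 ≤ r) (hr : r ≤ 1 / 2) : r / √(1 - r ^ 2) ≤ 2 * r := by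
  have : 1 / 2 ≤ √(1 - r ^ 2) := (Real.le_sqrt (by norm_num) (by nlinarith)).2 (by nlinarith)
  rw [div_le_iff₀ (by linarith)]
  nlinarith

lemma abs_deriv_comp_gam_le {F : ℝ → ℝ} {F' M h r : ℝ} (hF : HasDerivAt F F' (h + gam r))
    (hF' : |F'| ≤ M) (hr₀ : 0 ≤ r) (hr : r ≤ 1 / 2) :
    |deriv (fun r => F (h + gam r)) r| ≤ 2 * r * M := by
  have hg := (hasDerivAt_gam (r := r) (by nlinarith)).const_add h
  rw [show (fun r => F (h + gam r)) = F ∘ fun r => h + gam r from rfl, (hF.comp r hg).deriv,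
    abs_mul, mul_comm, abs_of_nonneg (div_nonneg hr₀ (Real.sqrt_nonneg _))]
  exact mul_le_mul (gam_deriv_le hr₀ hr) hF' (abs_nonneg _) (by linarith)

/-- Proposition A.1, first group of estimates (slip case): pointwise bounds on
`Ψ`, `∂_z Ψ` and `∂_r Ψ` in the cusp region. -/
theorem Psi_bounds_order_le_one (δ βS βΩ : ℝ) (hδ : δ ∈ Set.Ioo (0 : ℝ) (1 / 4))
    (hβS : 0 < βS) (hβΩ : 0 < βΩ) :
    ∃ C : ℝ, 0 < C ∧ ∀ h ∈ Set.Ioo (0 : ℝ) (1 / 4), ∀ r z : ℝ,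
      0 < r → r < δ → 0 < z → z < h + gam r →
      |Psi βS βΩ h r z| ≤ C ∧
      |dZ (Psi βS βΩ h) r z| ≤ C / (h + gam r) ∧
      |dR (Psi βS βΩ h) r z| ≤ C * r / (h + gam r) := by
  obtain ⟨K, hK, hc₁, hc₂, hc₃⟩ := exists_c1BoundedOn_slipCoeff hβS hβΩ
  refine ⟨24 * K, by positivity, fun h hh r z hr₀ hrδ hz₀ hzH => ?_⟩
  have hH : 0 < h + gam r := by linarith [gam_nonneg r, hh.1]
  have hHs : h + gam r ∈ Icc (0 : ℝ) 2 := ⟨hH.le, by linarith [gam_le_one r, hh.2]⟩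
  have hz : z ∈ Icc 0 (h + gam r) := ⟨hz₀.le, hzH.le⟩
  have hΨ : ∀ r' z', Psi βS βΩ h r' z' = cubicProfile (slipCoeff slipP₁ βS βΩ)
      (slipCoeff slipP₂ βS βΩ) (slipCoeff slipP₃ βS βΩ) (h + gam r') z' := fun _ _ => rfl
  refine ⟨?_, ?_, ?_⟩
  · rw [hΨ]
    linarith [abs_cubicProfile_le hc₁ hc₂ hc₃ hHs hz hH]
  · calc |dZ (Psi βS βΩ h) r z| ≤ 6 * K / (h + gam r) :=
          abs_deriv_cubicProfile_le hc₁ hc₂ hc₃ hHs hz hH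
      _ ≤ 24 * K / (h + gam r) := by gcongr; linarith
  · obtain ⟨F', hF, hF'⟩ := exists_hasDerivAt_cubicProfile_gap hc₁ hc₂ hc₃ hHs hz hH hHs.2
    calc |dR (Psi βS βΩ h) r z| ≤ 2 * r * (12 * K / (h + gam r)) :=
          abs_deriv_comp_gam_le hF hF' hr₀.le (by linarith [hδ.2])
      _ = 24 * K * r / (h + gam r) := by ring
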